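/- For every k ≥ 0 and all n, p ≥ 3^k, the structures A_n⁺ and A_p⁺ satisfy the same L-sentences of quantifier rank at most k, i.e., A_n⁺ ≡_k A_p⁺. -/

import Mathlib

open FirstOrder FirstOrder.Language

abbrev PI (n : ℕ) : Type := Fin n → Option Bool

def Subs {n : ℕ} (e e' : PI n) : Prop := ∀ i, e i ≠ none → e' i = e i

/-- The quantifier rank of a first-order formula. -/
def qr {L : Language} {α : Type*} : {k : ℕ} → L.BoundedFormula α k → ℕ
  | _, BoundedFormula.falsum => 0
  | _, BoundedFormula.equal _ _ => 0
  | _, BoundedFormula.rel _ _ => 0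
  | _, BoundedFormula.imp f g => max (qr f) (qr g)
  | _, BoundedFormula.all f => qr f + 1

/-- The FOIL language: one unary relation (Pos) and one binary relation (⊑). -/
def foilLang : Language where
  Functions _ := Empty
  Relations n := match n with
    | 1 => Unit
    | 2 => Unit
    | _ => Empty

/-- The all-ones total instance `1^n`. -/
def ones (n : ℕ) : PI n := fun _ => some true

/-- The structure `A_n⁺`: partial instances of dimension `n` with subsumption, where the
interpretation of `Pos` is the singleton `{1^n}`. -/
instance aplusStruct (n : ℕ) : foilLang.Structure (PI n) where
  funMap := fun {_} f => f.elim
  RelMap := fun {k} r v => match k, r with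
    | 1, _ => v 0 = ones n
    | 2, _ => Subs (v 0) (v 1)

/-! ### Auxiliary machinery -/

def col {n l : ℕ} (xs : Fin l → PI n) (i : Fin n) : Fin l → Option Bool := fun j => xs j i

noncomputable def cnt {n l : ℕ} (xs : Fin l → PI n) (c : Fin l → Option Bool) : ℕ := by
  classical exact (Finset.univ.filter (fun i => col xs i = c)).card

def Eqv {n p l : ℕ} (r : ℕ) (xsn : Fin l → PI n) (xsp : Fin l → PI p) : Prop :=
  ∀ c, min (cnt xsn c) (3 ^ r) = min (cnt xsp c) (3 ^ r)

lemma cnt_ne_zero {n l : ℕ} (xs : Fin l → PI n) (c : Fin l → Option Bool) :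
    cnt xs c ≠ 0 ↔ ∃ i, col xs i = c := by
  classical
  rw [cnt, Ne, Finset.card_eq_zero, Finset.filter_eq_empty_iff]
  push_neg
  simp

lemma occ_iff {n p l r : ℕ} {xsn : Fin l → PI n} {xsp : Fin l → PI p}
    (h : Eqv r xsn xsp) (c : Fin l → Option Bool) :
    cnt xsn c ≠ 0 ↔ cnt xsp c ≠ 0 := by
  have h1 := h c
  have h2 : 1 ≤ 3 ^ r := Nat.one_le_pow _ _ (by norm_num)
  omega

lemma forall_col_iff {n l : ℕ} (xs : Fin l → PI n) (P : (Fin l → Option Bool) → Prop) :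
    (∀ i, P (col xs i)) ↔ ∀ c, cnt xs c ≠ 0 → P c := by
  constructor
  · intro h c hc
    obtain ⟨i, hi⟩ := (cnt_ne_zero xs c).mp hc
    exact hi ▸ h i
  · intro h i
    exact h (col xs i) ((cnt_ne_zero xs _).mpr ⟨i, rfl⟩)

lemma transfer {n p l r : ℕ} (xsn : Fin l → PI n) (xsp : Fin l → PI p) (h : Eqv r xsn xsp)
    (P : (Fin l → Option Bool) → Prop) : (∀ i, P (col xsn i)) ↔ (∀ i, P (col xsp i)) := by
  rw [forall_col_iff, forall_col_iff]
  exact forall_congr' fun c => imp_congr_left (occ_iff h c)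

lemma term_eq_var {γ : Type*} (t : foilLang.Term γ) : ∃ x, t = Term.var x := by
  cases t with
  | var x => exact ⟨x, rfl⟩
  | func f ts => exact Empty.elim f

lemma col_snoc_eq {n l : ℕ} (xs : Fin l → PI n) (a : PI n) (i : Fin n)
    (c' : Fin (l + 1) → Option Bool) :
    (col (Fin.snoc xs a) i = c') ↔ (col xs i = Fin.init c' ∧ a i = c' (Fin.last l)) := by
  constructor
  · intro h
    constructor
    · funext j
      have := congrFun h j.castSucc
      simpa [col, Fin.init, Fin.snoc_castSucc] using this
    · have := congrFun h (Fin.last l)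
      simpa [col, Fin.snoc_last] using this
  · rintro ⟨h1, h2⟩
    funext j
    refine Fin.lastCases ?_ ?_ j
    · simpa [col, Fin.snoc_last] using h2
    · intro j0
      have := congrFun h1 j0
      simpa [col, Fin.init, Fin.snoc_castSucc] using this

lemma cnt_snoc {n l : ℕ} (xs : Fin l → PI n) (a : PI n) (c' : Fin (l + 1) → Option Bool) :
    cnt (Fin.snoc xs a) c'
      = (Finset.univ.filter
          (fun i => col xs i = Fin.init c' ∧ a i = c' (Fin.last l))).card := by
  classical
  rw [cnt]
  congr 1
  ext i
  simp [col_snoc_eq]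

lemma forth {n p l r : ℕ} (xsn : Fin l → PI n) (xsp : Fin l → PI p)
    (h : Eqv (r + 1) xsn xsp) (a : PI n) :
    ∃ b : PI p, Eqv r (Fin.snoc xsn a) (Fin.snoc xsp b) := by
  classical
  set T := 3 ^ r with hT
  have hT1 : 1 ≤ T := Nat.one_le_pow _ _ (by norm_num)
  set A : (Fin l → Option Bool) → Option Bool → ℕ :=
    fun c v => (Finset.univ.filter (fun i : Fin n => col xsn i = c ∧ a i = v)).card with hA
  have hsum : ∀ c, A c none + A c (some false) + A c (some true) = cnt xsn c := by
    intro c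
    have e1 : Finset.univ.filter (fun i : Fin n => col xsn i = c)
        = ((Finset.univ.filter (fun i => col xsn i = c ∧ a i = none))
          ∪ (Finset.univ.filter (fun i => col xsn i = c ∧ a i = some false)))
          ∪ (Finset.univ.filter (fun i => col xsn i = c ∧ a i = some true)) := by
      ext i
      simp only [Finset.mem_filter, Finset.mem_union, Finset.mem_univ, true_and]
      rcases ha : a i with _ | _ | _ <;> simp [ha] <;> tauto
    have d1 : Disjoint (Finset.univ.filter (fun i : Fin n => col xsn i = c ∧ a i = none))
        (Finset.univ.filter (fun i => col xsn i = c ∧ a i = some false)) := by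
      rw [Finset.disjoint_left]
      intro x hx1 hx2
      simp only [Finset.mem_filter] at hx1 hx2
      rw [hx1.2.2] at hx2
      simp at hx2
    have d2 : Disjoint ((Finset.univ.filter (fun i : Fin n => col xsn i = c ∧ a i = none))
          ∪ (Finset.univ.filter (fun i => col xsn i = c ∧ a i = some false)))
        (Finset.univ.filter (fun i => col xsn i = c ∧ a i = some true)) := by
      rw [Finset.disjoint_left]
      intro x hx1 hx2
      simp only [Finset.mem_union, Finset.mem_filter] at hx1 hx2
      rcases hx1 with h1 | h1 <;> rw [h1.2.2] at hx2 <;> simp at hx2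
    rw [cnt, e1, Finset.card_union_of_disjoint d2, Finset.card_union_of_disjoint d1]
  set t0 : (Fin l → Option Bool) → ℕ := fun c =>
    if cnt xsn c = cnt xsp c then A c none
    else if T ≤ A c none then cnt xsp c - min (A c (some false)) T - min (A c (some true)) T
    else A c none with ht0
  set t1 : (Fin l → Option Bool) → ℕ := fun c =>
    if cnt xsn c = cnt xsp c then A c (some false)
    else if T ≤ A c none then min (A c (some false)) T
    else if T ≤ A c (some false) then cnt xsp c - A c none - min (A c (some true)) T
    else A c (some false) with ht1
  have key : ∀ c, t0 c + t1 c ≤ cnt xsp c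
      ∧ min (A c none) T = min (t0 c) T
      ∧ min (A c (some false)) T = min (t1 c) T
      ∧ min (A c (some true)) T = min (cnt xsp c - t0 c - t1 c) T := by
    intro c
    have h1 := h c
    have h2 := hsum c
    have h3 : (3 : ℕ) ^ (r + 1) = 3 * T := by rw [hT, pow_succ]; ring
    rw [h3] at h1
    simp only [ht0, ht1]
    split_ifs with e1 e2 e3 <;> omega
  have hex : ∀ c, ∃ u0 : Finset (Fin p), ∃ u1 : Finset (Fin p),
      u0 ⊆ Finset.univ.filter (fun i => col xsp i = c) ∧
      u1 ⊆ (Finset.univ.filter (fun i => col xsp i = c)) \ u0 ∧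
      u0.card = t0 c ∧ u1.card = t1 c := by
    intro c
    have hcard : (Finset.univ.filter (fun i => col xsp i = c)).card = cnt xsp c := by
      rw [cnt]
    obtain ⟨u0, hu0, hc0⟩ := Finset.exists_subset_card_eq
      (s := Finset.univ.filter (fun i => col xsp i = c)) (n := t0 c)
      (by rw [hcard]; have := (key c).1; omega)
    obtain ⟨u1, hu1, hc1⟩ := Finset.exists_subset_card_eq
      (s := (Finset.univ.filter (fun i => col xsp i = c)) \ u0) (n := t1 c)
      (by rw [Finset.card_sdiff_of_subset hu0, hc0, hcard]; have := (key c).1; omega)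
    exact ⟨u0, u1, hu0, hu1, hc0, hc1⟩
  choose U0 U1 hU0 hU1 hc0 hc1 using hex
  set b : PI p := fun i' =>
    if i' ∈ U0 (col xsp i') then none
    else if i' ∈ U1 (col xsp i') then some false else some true with hb
  refine ⟨b, ?_⟩
  intro c'
  set c := Fin.init c' with hc
  have hcn : cnt (Fin.snoc xsn a) c' = A c (c' (Fin.last l)) := by
    rw [cnt_snoc, hA]
  have hmemU0 : ∀ i', i' ∈ U0 c → col xsp i' = c := by
    intro i' hi'
    have := hU0 c hi'
    simpa using this
  have hmemU1 : ∀ i', i' ∈ U1 c → col xsp i' = c ∧ i' ∉ U0 c := by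
    intro i' hi'
    have := hU1 c hi'
    simp only [Finset.mem_sdiff, Finset.mem_filter, Finset.mem_univ, true_and] at this
    exact this
  have hbn : (Finset.univ.filter (fun i' => col xsp i' = c ∧ b i' = none)) = U0 c := by
    ext i'
    simp only [Finset.mem_filter, Finset.mem_univ, true_and, hb]
    constructor
    · rintro ⟨hcol, hbi⟩
      rw [hcol] at hbi
      by_contra hmem
      rw [if_neg hmem] at hbi
      split_ifs at hbi <;> simp_all
    · intro hmem
      have hcol := hmemU0 i' hmem
      refine ⟨hcol, ?_⟩
      rw [hcol, if_pos hmem]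
  have hbf : (Finset.univ.filter (fun i' => col xsp i' = c ∧ b i' = some false)) = U1 c := by
    ext i'
    simp only [Finset.mem_filter, Finset.mem_univ, true_and, hb]
    constructor
    · rintro ⟨hcol, hbi⟩
      rw [hcol] at hbi
      rcases Decidable.em (i' ∈ U0 c) with m0 | m0
      · rw [if_pos m0] at hbi; simp at hbi
      · rw [if_neg m0] at hbi
        rcases Decidable.em (i' ∈ U1 c) with m1 | m1
        · exact m1
        · rw [if_neg m1] at hbi; simp at hbi
    · intro hmem
      obtain ⟨hcol, hnot0⟩ := hmemU1 i' hmem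
      refine ⟨hcol, ?_⟩
      rw [hcol, if_neg hnot0, if_pos hmem]
  have hbt : (Finset.univ.filter (fun i' => col xsp i' = c ∧ b i' = some true))
      = ((Finset.univ.filter (fun i' => col xsp i' = c)) \ U0 c) \ U1 c := by
    ext i'
    simp only [Finset.mem_filter, Finset.mem_univ, true_and, Finset.mem_sdiff, hb]
    constructor
    · rintro ⟨hcol, hbi⟩
      rw [hcol] at hbi
      rcases Decidable.em (i' ∈ U0 c) with m0 | m0
      · rw [if_pos m0] at hbi; simp at hbi
      · rw [if_neg m0] at hbi
        rcases Decidable.em (i' ∈ U1 c) with m1 | m1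
        · rw [if_pos m1] at hbi; simp at hbi
        · exact ⟨⟨hcol, m0⟩, m1⟩
    · rintro ⟨⟨hcol, m0⟩, m1⟩
      refine ⟨hcol, ?_⟩
      rw [hcol, if_neg m0, if_neg m1]
  have hcardP : (Finset.univ.filter (fun i' => col xsp i' = c)).card = cnt xsp c := by rw [cnt]
  have hcp : cnt (Fin.snoc xsp b) c'
      = (Finset.univ.filter (fun i' => col xsp i' = c ∧ b i' = c' (Fin.last l))).card := by
    rw [cnt_snoc]
  rw [← hT]
  rw [hcn, hcp]
  rcases hv : c' (Fin.last l) with _ | _ | _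
  · rw [hbn, hc0]
    exact (key c).2.1
  · rw [hbf, hc1]
    exact (key c).2.2.1
  · rw [hbt]
    have hsub1 : U1 c ⊆ (Finset.univ.filter (fun i' => col xsp i' = c)) \ U0 c := hU1 c
    rw [Finset.card_sdiff_of_subset hsub1, Finset.card_sdiff_of_subset (hU0 c), hcardP, hc0, hc1]
    exact (key c).2.2.2

lemma main {n p : ℕ} : ∀ {l : ℕ} (φ : foilLang.BoundedFormula Empty l) (r : ℕ), qr φ ≤ r →
    ∀ (vn : Empty → PI n) (vp : Empty → PI p) (xsn : Fin l → PI n) (xsp : Fin l → PI p),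
    Eqv r xsn xsp → (φ.Realize vn xsn ↔ φ.Realize vp xsp) := by
  intro l φ
  induction φ with
  | falsum =>
    intro r hr vn vp xsn xsp he
    simp [BoundedFormula.Realize]
  | equal t₁ t₂ =>
    intro r hr vn vp xsn xsp he
    obtain ⟨x₁, rfl⟩ := term_eq_var t₁
    obtain ⟨x₂, rfl⟩ := term_eq_var t₂
    rcases x₁ with e | j₁
    · exact e.elim
    rcases x₂ with e | j₂
    · exact e.elim
    show xsn j₁ = xsn j₂ ↔ xsp j₁ = xsp j₂
    rw [funext_iff, funext_iff]
    exact transfer xsn xsp he (fun c => c j₁ = c j₂)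
  | @rel l k R ts =>
    intro r hr vn vp xsn xsp he
    rcases k with _ | _ | _ | k
    · exact Empty.elim R
    · obtain ⟨x, hx⟩ := term_eq_var (ts 0)
      rcases x with e | j
      · exact e.elim
      show ((ts 0).realize (Sum.elim vn xsn)) = ones n
          ↔ ((ts 0).realize (Sum.elim vp xsp)) = ones p
      rw [hx]
      show xsn j = ones n ↔ xsp j = ones p
      rw [funext_iff, funext_iff]
      exact transfer xsn xsp he (fun c => c j = some true)
    · obtain ⟨x₀, hx₀⟩ := term_eq_var (ts 0)
      obtain ⟨x₁, hx₁⟩ := term_eq_var (ts 1)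
      rcases x₀ with e | j₀
      · exact e.elim
      rcases x₁ with e | j₁
      · exact e.elim
      show Subs ((ts 0).realize (Sum.elim vn xsn)) ((ts 1).realize (Sum.elim vn xsn))
          ↔ Subs ((ts 0).realize (Sum.elim vp xsp)) ((ts 1).realize (Sum.elim vp xsp))
      rw [hx₀, hx₁]
      show Subs (xsn j₀) (xsn j₁) ↔ Subs (xsp j₀) (xsp j₁)
      exact transfer xsn xsp he (fun c => c j₀ ≠ none → c j₁ = c j₀)
    · exact Empty.elim R
  | imp f g ihf ihg =>
    intro r hr vn vp xsn xsp he
    simp only [qr] at hr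
    simp only [BoundedFormula.realize_imp]
    exact imp_congr (ihf r (by omega) vn vp xsn xsp he) (ihg r (by omega) vn vp xsn xsp he)
  | all f ih =>
    intro r hr vn vp xsn xsp he
    simp only [qr] at hr
    obtain ⟨r', rfl⟩ : ∃ r', r = r' + 1 := ⟨r - 1, by omega⟩
    simp only [BoundedFormula.realize_all]
    constructor
    · intro H bb
      obtain ⟨aa, hab⟩ := forth xsp xsn (fun c => (he c).symm) bb
      exact (ih r' (by omega) vn vp _ _ (fun c => (hab c).symm)).mp (H aa)
    · intro H aa
      obtain ⟨bb, hab⟩ := forth xsn xsp he aa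
      exact (ih r' (by omega) vn vp _ _ hab).mpr (H bb)

theorem stmt4 (k n p : ℕ) (hn : 3 ^ k ≤ n) (hp : 3 ^ k ≤ p)
    (φ : foilLang.Sentence) (hφ : qr φ ≤ k) :
    PI n ⊨ φ ↔ PI p ⊨ φ := by
  classical
  have hc : ∀ (m : ℕ) (xs : Fin 0 → PI m) (c : Fin 0 → Option Bool), cnt xs c = m := by
    intro m xs c
    rw [cnt]
    have h : (Finset.univ.filter (fun i : Fin m => col xs i = c)) = Finset.univ := by
      ext i
      simp only [Finset.mem_filter, Finset.mem_univ, true_and, iff_true]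
      exact funext fun j => Fin.elim0 j
    rw [h, Finset.card_univ, Fintype.card_fin]
  have he : ∀ (xsn : Fin 0 → PI n) (xsp : Fin 0 → PI p), Eqv k xsn xsp := by
    intro xsn xsp c
    rw [hc n, hc p]
    omega
  exact main φ k hφ _ _ _ _ (he _ _)
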